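/- arXiv:2410.04281 — 2 statements merged into one kernel-verified Lean document; each statement's English description precedes it below -/
import Mathlib

section
/- Consider the single-node MDP with state (s,r), action u ∈ {0,1}, per-stage cost C(s,r,u) = ω(r)·s + η·u with η > 0 and ω(r) ≥ 0, where action u=1 from any state (s,r) with s>0 leads to age 0 with probability 1−λ and age 1 with probability λ, and action u=0 leads to age s+1; the weight component transitions independently according to P. Then the optimal (discounted, discount factor β ∈ (0,1)) value function V(s,r) is nondecreasing in s for each fixed r. -/
/-!
Value iteration preserves monotonicity in the age. Transmitting costs the same continuation
value from every age, while waiting at age `s` continues from age `s + 1`; if the current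
iterate is nondecreasing in the age, waiting from a larger age is costlier, and the reset value,
a convex combination of the values at ages 0 and 1, lies below every waiting value. Hence every
iterate is nondecreasing in `s`, and so is their pointwise limit.
-/

open Finset Filter Topology

namespace AgeOfSynchronization

variable {R : Type*} [Fintype R] (P : R → R → ℝ) (lam : ℝ)

/-- Expected continuation value after transmitting: the age becomes 0 with probability
`1 - lam` and 1 with probability `lam`. -/
def resetValue (v : ℕ → R → ℝ) (r : R) : ℝ :=
  ∑ r', P r r' * ((1 - lam) * v 0 r' + lam * v 1 r')

def waitValue (v : ℕ → R → ℝ) (s : ℕ) (r : R) : ℝ :=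
  ∑ r', P r r' * v (s + 1) r'

def bellman (ω : R → ℝ) (η β : ℝ) (v : ℕ → R → ℝ) (s : ℕ) (r : R) : ℝ :=
  if s = 0 then
    min (ω r * s + η + β * resetValue P lam v r) (ω r * s + β * resetValue P lam v r)
  else
    min (ω r * s + η + β * resetValue P lam v r) (ω r * s + β * waitValue P v s r)

variable {P lam} {v : ℕ → R → ℝ}

theorem waitValue_monotone (hP : ∀ r r', 0 ≤ P r r') (hv : ∀ r, Monotone fun s => v s r)
    (r : R) : Monotone fun s => waitValue P v s r := fun _ _ hst => by
  dsimp only [waitValue]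
  gcongr with r'
  · exact hP r r'
  · exact hv r' (Nat.succ_le_succ hst)

theorem resetValue_le_waitValue (hP : ∀ r r', 0 ≤ P r r') (hlam0 : 0 ≤ lam) (hlam1 : lam ≤ 1)
    (hv : ∀ r, Monotone fun s => v s r) (s : ℕ) (r : R) :
    resetValue P lam v r ≤ waitValue P v s r := by
  unfold resetValue waitValue
  gcongr with r'
  · exact hP r r'
  · have h0 : v 0 r' ≤ v (s + 1) r' := hv r' (Nat.zero_le _)
    have h1 : v 1 r' ≤ v (s + 1) r' := hv r' (Nat.succ_le_succ (Nat.zero_le _))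
    nlinarith

theorem bellman_monotone (hP : ∀ r r', 0 ≤ P r r') (hlam0 : 0 ≤ lam) (hlam1 : lam ≤ 1)
    {ω : R → ℝ} (hω : ∀ r, 0 ≤ ω r) (η : ℝ) {β : ℝ} (hβ : 0 ≤ β)
    (hv : ∀ r, Monotone fun s => v s r) (r : R) :
    Monotone fun s => bellman P lam ω η β v s r := by
  refine monotone_nat_of_le_succ fun s => ?_
  have hage : ω r * s ≤ ω r * (s + 1 : ℕ) := by gcongr; exacts [hω r, Nat.le_succ s]
  rcases s with _ | s
  · have hreset := mul_le_mul_of_nonneg_left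
      (resetValue_le_waitValue hP hlam0 hlam1 hv 1 r) hβ
    simp only [bellman, if_pos, if_neg (Nat.succ_ne_zero 0)]
    apply min_le_min <;> linarith
  · have hwait := mul_le_mul_of_nonneg_left
      (waitValue_monotone hP hv r (Nat.le_succ (s + 1))) hβ
    simp only [bellman, if_neg (Nat.succ_ne_zero _)]
    apply min_le_min <;> linarith

end AgeOfSynchronization

open AgeOfSynchronization in
theorem value_function_monotone_in_age_general {R : Type*} [Fintype R]
    (P : R → R → ℝ) (hPnn : ∀ r r', 0 ≤ P r r')
    (lam : ℝ) (hlam0 : 0 ≤ lam) (hlam1 : lam ≤ 1)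
    (ω : R → ℝ) (hω : ∀ r, 0 ≤ ω r)
    (η : ℝ) (β : ℝ) (hβ0 : 0 < β)
    (Vk : ℕ → ℕ → R → ℝ)
    (hV0 : ∀ s r, Vk 0 s r = 0)
    (hVrec : ∀ k s r, Vk (k + 1) s r =
      if s = 0 then
        min (ω r * s + η + β * ∑ r', P r r' * ((1 - lam) * Vk k 0 r' + lam * Vk k 1 r'))
            (ω r * s + β * ∑ r', P r r' * ((1 - lam) * Vk k 0 r' + lam * Vk k 1 r'))
      else
        min (ω r * s + η + β * ∑ r', P r r' * ((1 - lam) * Vk k 0 r' + lam * Vk k 1 r'))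
            (ω r * s + β * ∑ r', P r r' * Vk k (s + 1) r'))
    (V : ℕ → R → ℝ)
    (hlim : ∀ s r, Tendsto (fun k => Vk k s r) atTop (𝓝 (V s r))) :
    ∀ r, Monotone fun s => V s r := by
  have iterate_monotone : ∀ k r, Monotone fun s => Vk k s r := by
    intro k
    induction k with
    | zero => simpa only [hV0] using fun _ => monotone_const
    | succ k ih =>
      intro r s t hst
      simpa only [hVrec, bellman, resetValue, waitValue] using
        bellman_monotone hPnn hlam0 hlam1 hω η hβ0.le ih r hst
  intro r s t hst
  exact le_of_tendsto_of_tendsto' (hlim s r) (hlim t r) fun k => iterate_monotone k r hst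

/-- The optimal discounted value function of the single-node AoS MDP, obtained as
the pointwise limit of value iteration starting from 0, is nondecreasing in the
age `s` for each fixed weight state `r`. -/
theorem value_function_monotone_in_age {R : Type*} [Fintype R]
    (P : R → R → ℝ) (hPnn : ∀ r r', 0 ≤ P r r') (hProw : ∀ r, ∑ r', P r r' = 1)
    (lam : ℝ) (hlam0 : 0 ≤ lam) (hlam1 : lam ≤ 1)
    (ω : R → ℝ) (hω : ∀ r, 0 ≤ ω r)
    (η : ℝ) (hη : 0 < η) (β : ℝ) (hβ0 : 0 < β) (hβ1 : β < 1)
    (Vk : ℕ → ℕ → R → ℝ)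
    (hV0 : ∀ s r, Vk 0 s r = 0)
    (hVrec : ∀ k s r, Vk (k + 1) s r =
      if s = 0 then
        min (ω r * s + η + β * ∑ r', P r r' * ((1 - lam) * Vk k 0 r' + lam * Vk k 1 r'))
            (ω r * s + β * ∑ r', P r r' * ((1 - lam) * Vk k 0 r' + lam * Vk k 1 r'))
      else
        min (ω r * s + η + β * ∑ r', P r r' * ((1 - lam) * Vk k 0 r' + lam * Vk k 1 r'))
            (ω r * s + β * ∑ r', P r r' * Vk k (s + 1) r'))
    (V : ℕ → R → ℝ)
    (hlim : ∀ s r, Tendsto (fun k => Vk k s r) atTop (𝓝 (V s r))) :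
    ∀ r, Monotone fun s => V s r :=
  value_function_monotone_in_age_general P hPnn lam hlam0 hlam1 ω hω η β hβ0 Vk hV0 hVrec V hlim
end

section
/- In the single-node MDP above (discounted with factor β ∈ (0,1)), if for state (s₁,r) the action u=1 is optimal (i.e., C(s₁,r,1)+β·E₁[V] ≤ C(s₁,r,0)+β·E₀[V(s₁+1,·)]), then for every s ≥ s₁ the action u=1 is also optimal in state (s,r). Consequently the optimal policy has a threshold structure in s for each fixed r. -/
/-!
Both actions incur the same immediate age cost `ω r * s`, and the continuation value after
transmitting does not depend on `s`. So only the discounted expected value of waiting,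
`β * ∑ r', P r r' * V (s + 1) r'`, changes with `s`, and it is nondecreasing because `V` is.
-/

open Finset

lemma monotone_sum_mul_of_nonneg {ι α : Type*} [Preorder α] (t : Finset ι) {p : ι → ℝ}
    (hp : ∀ i, 0 ≤ p i) {f : α → ι → ℝ} (hf : ∀ i, Monotone fun a => f a i) :
    Monotone fun a => ∑ i ∈ t, p i * f a i :=
  fun _ _ hab => sum_le_sum fun i _ => mul_le_mul_of_nonneg_left (hf i hab) (hp i)

theorem threshold_structure_general {R : Type*} [Fintype R]
    (P : R → R → ℝ) (hPnn : ∀ r r', 0 ≤ P r r')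
    (lam : ℝ)
    (ω : R → ℝ)
    (η : ℝ) (β : ℝ) (hβ0 : 0 < β)
    (V : ℕ → R → ℝ) (hVmono : ∀ r', Monotone fun s => V s r')
    (r : R) (s₁ : ℕ)
    (hopt : ω r * s₁ + η + β * ∑ r', P r r' * ((1 - lam) * V 0 r' + lam * V 1 r')
            ≤ ω r * s₁ + β * ∑ r', P r r' * V (s₁ + 1) r') :
    ∀ s, s₁ ≤ s →
      ω r * s + η + β * ∑ r', P r r' * ((1 - lam) * V 0 r' + lam * V 1 r')
        ≤ ω r * s + β * ∑ r', P r r' * V (s + 1) r' := by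
  intro s hs
  have hwait : ∑ r', P r r' * V (s₁ + 1) r' ≤ ∑ r', P r r' * V (s + 1) r' :=
    monotone_sum_mul_of_nonneg univ (hPnn r) hVmono (Nat.succ_le_succ hs)
  have := mul_le_mul_of_nonneg_left hwait hβ0.le
  linarith

/-- Threshold structure of the optimal policy: if transmitting (u = 1) is optimal at
age `s₁` (for weight state `r`), then it is optimal at every age `s ≥ s₁`. -/
theorem threshold_structure {R : Type*} [Fintype R]
    (P : R → R → ℝ) (hPnn : ∀ r r', 0 ≤ P r r') (hProw : ∀ r, ∑ r', P r r' = 1)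
    (lam : ℝ) (hlam0 : 0 ≤ lam) (hlam1 : lam ≤ 1)
    (ω : R → ℝ) (hω : ∀ r, 0 ≤ ω r)
    (η : ℝ) (hη : 0 < η) (β : ℝ) (hβ0 : 0 < β) (hβ1 : β < 1)
    (V : ℕ → R → ℝ) (hVmono : ∀ r', Monotone fun s => V s r')
    (r : R) (s₁ : ℕ) (hs₁ : 0 < s₁)
    (hopt : ω r * s₁ + η + β * ∑ r', P r r' * ((1 - lam) * V 0 r' + lam * V 1 r')
            ≤ ω r * s₁ + β * ∑ r', P r r' * V (s₁ + 1) r') :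
    ∀ s, s₁ ≤ s →
      ω r * s + η + β * ∑ r', P r r' * ((1 - lam) * V 0 r' + lam * V 1 r')
        ≤ ω r * s + β * ∑ r', P r r' * V (s + 1) r' :=
  threshold_structure_general P hPnn lam ω η β hβ0 V hVmono r s₁ hopt
end
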